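/- arXiv:2003.08081 — 3 statements merged into one kernel-verified Lean document; each statement's English description precedes it below -/
import Mathlib

section
/- Fix real δ, ω_p with 0 < δ < ω_p and Δt > 0. For every real τ with τ < −Δt/2, the inverse Fourier integral of the Green function vanishes: (1/2π) ∫_ℝ (e^{iωΔt/2} − e^{−iωΔt/2}) e^{iωτ} / (iω (ω² − 2iδω − ω_p²)) dω = 0 (causality of the Green function of the Lorentz medium). -/
/-! Write ω² − 2iδω − ω_p² = (ω − p)(ω − q) with p, q = ±√(ω_p² − δ²) + iδ in the upper
half-plane, and (e^{iωΔt/2} − e^{−iωΔt/2}) e^{iωτ} / (iω) = ∫_{τ−Δt/2}^{τ+Δt/2} e^{iωs} ds.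
By Fubini the integral becomes ∫_{τ−Δt/2}^{τ+Δt/2} ∫_ℝ e^{iωs} / ((ω − p)(ω − q)) dω ds, and
τ + Δt/2 < 0. In place of the contour argument, the inner integral is recognised by Fourier
inversion as a nonzero multiple of g(s), where g(t) = 𝟙_{t ≥ 0} (e^{ipt} − e^{iqt}) is causal
and has Fourier transform i(q − p) / ((ω − p)(ω − q)); hence it vanishes for s < 0. -/

open MeasureTheory Set Complex FourierTransform Real

lemma integrable_inv_normSq_ofReal_sub {p : ℂ} (hp : p.im ≠ 0) :
    Integrable fun ω : ℝ => (normSq ((ω : ℂ) - p))⁻¹ := by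
  refine ((ProbabilityTheory.integrable_cauchyPDFReal p.re (γ := Real.nnabs p.im)).const_mul
    (π * |p.im|⁻¹)).congr (ae_of_all _ fun ω => ?_)
  simp only [ProbabilityTheory.cauchyPDFReal, normSq_apply, Real.coe_nnabs, sq_abs, sub_re,
    ofReal_re, sub_im, ofReal_im]
  field_simp
  ring

lemma integrable_inv_ofReal_sub_mul_sub {p q : ℂ} (hp : p.im ≠ 0) (hq : q.im ≠ 0) :
    Integrable fun ω : ℝ => (((ω : ℂ) - p) * ((ω : ℂ) - q))⁻¹ := by
  -- `‖a b‖⁻¹ ≤ ‖a‖⁻² + ‖b‖⁻²`, and each term on the right is a Cauchy density up to a constant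
  refine ((integrable_inv_normSq_ofReal_sub hp).add (integrable_inv_normSq_ofReal_sub hq)).mono'
    (by fun_prop) (ae_of_all _ fun ω => ?_)
  simp only [normSq_eq_norm_sq, norm_inv, norm_mul, mul_inv, ← inv_pow, Pi.add_apply]
  nlinarith [sq_nonneg (‖(ω : ℂ) - p‖⁻¹ - ‖(ω : ℂ) - q‖⁻¹)]

noncomputable def causalExp (p : ℂ) : ℝ → ℂ :=
  (Ici 0).indicator fun t => cexp (I * p * t)

lemma causalExp_of_neg (p : ℂ) {t : ℝ} (ht : t < 0) : causalExp p t = 0 :=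
  indicator_of_notMem (not_le.2 ht) _

lemma integrable_causalExp {p : ℂ} (hp : 0 < p.im) : Integrable (causalExp p) :=
  (integrable_indicator_iff measurableSet_Ici).2 <| (integrableOn_Ici_iff_integrableOn_Ioi).2 <|
    integrableOn_exp_mul_complex_Ioi (by simpa using hp) 0

lemma fourier_causalExp {p : ℂ} (hp : 0 < p.im) (ξ : ℝ) :
    𝓕 (causalExp p) ξ = (I * (2 * π * ξ - p))⁻¹ := by
  have hre : (I * (p - 2 * π * ξ)).re < 0 := by simpa using hp
  have hne : p - 2 * π * ξ ≠ 0 := by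
    intro h; simpa [hp.ne'] using congrArg im h
  have hintegrand : (fun v : ℝ => cexp (↑(-2 * π * v * ξ) * I) • causalExp p v) =
      (Ici (0 : ℝ)).indicator fun v : ℝ => cexp (I * (p - 2 * π * ξ) * v) := by
    ext v
    by_cases hv : v ∈ Ici (0 : ℝ)
    · simp only [causalExp, indicator_of_mem hv, smul_eq_mul, ← Complex.exp_add]
      push_cast; ring_nf
    · simp [causalExp, indicator_of_notMem hv]
  rw [fourier_real_eq_integral_exp_smul, hintegrand, integral_indicator measurableSet_Ici,
    integral_Ici_eq_integral_Ioi, integral_exp_mul_complex_Ioi hre, ofReal_zero, mul_zero,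
    Complex.exp_zero, ← neg_sub p, mul_neg, inv_neg]
  field_simp

lemma fourier_sub_of_integrable {V E : Type*} [NormedAddCommGroup V] [InnerProductSpace ℝ V]
    [MeasurableSpace V] [BorelSpace V] [FiniteDimensional ℝ V] [NormedAddCommGroup E]
    [NormedSpace ℂ E] {f g : V → E} (hf : Integrable f) (hg : Integrable g) (ξ : V) :
    𝓕 (f - g) ξ = 𝓕 f ξ - 𝓕 g ξ := by
  simp only [Real.fourier_eq, Pi.sub_apply, smul_sub]
  exact integral_sub ((Real.fourierIntegral_convergent_iff ξ).2 hf)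
    ((Real.fourierIntegral_convergent_iff ξ).2 hg)

lemma fourier_causalExp_sub {p q : ℂ} (hp : 0 < p.im) (hq : 0 < q.im) (ξ : ℝ) :
    𝓕 (causalExp p - causalExp q) ξ =
      I * (q - p) * ((2 * π * ξ - p) * (2 * π * ξ - q))⁻¹ := by
  have hp' : (2 * π * ξ : ℂ) - p ≠ 0 := by
    intro h; simpa [hp.ne'] using congrArg im h
  have hq' : (2 * π * ξ : ℂ) - q ≠ 0 := by
    intro h; simpa [hq.ne'] using congrArg im h
  rw [fourier_sub_of_integrable (integrable_causalExp hp) (integrable_causalExp hq),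
    fourier_causalExp hp, fourier_causalExp hq]
  field_simp
  linear_combination (p - q) * I_sq

lemma fourierInv_comp_two_pi_mul (Φ : ℝ → ℂ) (x : ℝ) :
    𝓕⁻ (fun ξ : ℝ => Φ (2 * π * ξ)) x = (2 * π : ℂ)⁻¹ * ∫ ω : ℝ, cexp (I * ω * x) * Φ ω := by
  rw [Real.fourierInv_eq_fourier_neg, Real.fourier_real_eq_integral_exp_smul]
  have := Measure.integral_comp_mul_left (fun ω : ℝ => cexp (I * ω * x) * Φ ω) (2 * π)
  simp only [smul_eq_mul]
  convert this using 1
  · congr 1; ext v; push_cast; ring_nf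
  · rw [abs_of_pos (by positivity), Complex.real_smul]; push_cast; rfl

theorem integral_cexp_mul_inv_sub_mul_sub_eq_zero {p q : ℂ} (hp : 0 < p.im) (hq : 0 < q.im)
    (hpq : p ≠ q) {x : ℝ} (hx : x < 0) :
    ∫ ω : ℝ, cexp (I * ω * x) * (((ω : ℂ) - p) * ((ω : ℂ) - q))⁻¹ = 0 := by
  set g := causalExp p - causalExp q
  set R : ℝ → ℂ := fun ω => I * (q - p) * (((ω : ℂ) - p) * ((ω : ℂ) - q))⁻¹
  have hFg : 𝓕 g = fun ξ => R (2 * π * ξ) := by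
    ext ξ; simp only [g, R, fourier_causalExp_sub hp hq]; push_cast; rfl
  have hFg_int : Integrable (𝓕 g) := by
    rw [hFg]
    exact ((integrable_inv_ofReal_sub_mul_sub hp.ne' hq.ne').const_mul _).comp_mul_left'
      (by positivity)
  have hg_x : g =ᶠ[nhds x] 0 := by
    filter_upwards [Iio_mem_nhds hx] with t (ht : t < 0)
    simp [g, causalExp_of_neg _ ht]
  have hinv : 𝓕⁻ (𝓕 g) x = g x :=
    ((integrable_causalExp hp).sub (integrable_causalExp hq)).fourierInv_fourier_eq hFg_int
      hg_x.continuousAt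
  rw [hg_x.eq_of_nhds, hFg, fourierInv_comp_two_pi_mul] at hinv
  simp only [R, mul_left_comm _ (I * (q - p)), integral_const_mul] at hinv
  simpa [sub_eq_zero, hpq.symm, Real.pi_ne_zero] using hinv

lemma integral_intervalIntegral_cexp_mul_swap {R : ℝ → ℂ} (hR : Integrable R) (a b : ℝ) :
    ∫ ω : ℝ, (∫ s in b..a, cexp (I * ω * s)) * R ω =
      ∫ s in b..a, ∫ ω : ℝ, cexp (I * ω * s) * R ω := by
  simp_rw [← intervalIntegral.integral_mul_const]
  refine (intervalIntegral_integral_swap ?_).symm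
  have : IsFiniteMeasure (volume.restrict (uIoc b a)) :=
    isFiniteMeasure_restrict.2 (by simp [uIoc])
  refine (hR.comp_snd _).bdd_mul (c := 1) (by fun_prop) (ae_of_all _ fun z => ?_)
  simp [norm_exp]

lemma sub_cexp_mul_cexp_div_eq_intervalIntegral {ω : ℝ} (hω : ω ≠ 0) (h τ : ℝ) (Q : ℂ) :
    (cexp (I * ω * h) - cexp (-(I * ω * h))) * cexp (I * ω * τ) / (I * ω * Q) =
      (∫ t in (τ - h)..(τ + h), cexp (I * ω * t)) * Q⁻¹ := by
  rw [integral_exp_mul_complex (mul_ne_zero I_ne_zero (ofReal_ne_zero.2 hω))]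
  push_cast
  simp only [mul_add, mul_sub, Complex.exp_add, Complex.exp_sub, Complex.exp_neg]
  field_simp

lemma sq_sub_two_I_mul_sub_sq_eq_mul {δ ωp : ℝ} (h : δ ^ 2 ≤ ωp ^ 2) (ω : ℂ) :
    ω ^ 2 - 2 * I * δ * ω - ωp ^ 2 =
      (ω - (√(ωp ^ 2 - δ ^ 2) + δ * I)) * (ω - (-√(ωp ^ 2 - δ ^ 2) + δ * I)) := by
  have hs : ((√(ωp ^ 2 - δ ^ 2) : ℝ) : ℂ) ^ 2 = ωp ^ 2 - δ ^ 2 := by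
    exact_mod_cast Real.sq_sqrt (sub_nonneg.2 h)
  linear_combination hs - (δ : ℂ) ^ 2 * I_sq

/-- Fix real `δ, ω_p` with `0 < δ < ω_p` and `Δt > 0`. For every real
`τ < −Δt/2`, the inverse Fourier integral of the Green function vanishes:
`(1/2π) ∫_ℝ (e^{iωΔt/2} − e^{−iωΔt/2}) e^{iωτ} / (iω (ω² − 2iδω − ω_p²)) dω = 0`
(causality of the Green function of the Lorentz medium). -/
theorem green_function_causality (δ ωp Δt τ : ℝ)
    (hδ : 0 < δ) (hδω : δ < ωp) (hΔt : 0 < Δt) (hτ : τ < -(Δt / 2)) :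
    (1 / (2 * (Real.pi : ℂ))) * (∫ ω : ℝ,
        (Complex.exp (Complex.I * ω * (Δt / 2)) -
            Complex.exp (-(Complex.I * ω * (Δt / 2)))) * Complex.exp (Complex.I * ω * τ) /
          (Complex.I * ω * ((ω : ℂ) ^ 2 - 2 * Complex.I * δ * ω - (ωp : ℂ) ^ 2))) = 0 := by
  set s := √(ωp ^ 2 - δ ^ 2)
  have hs : 0 < s := Real.sqrt_pos.2 (by nlinarith)
  set p : ℂ := s + δ * I
  set q : ℂ := -s + δ * I
  have hp : 0 < p.im := by simpa [p] using hδ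
  have hq : 0 < q.im := by simpa [q] using hδ
  have hpq : p ≠ q := by simp [p, q, CharZero.eq_neg_self_iff, hs.ne']
  have hfactor : ∀ ω : ℂ, ω ^ 2 - 2 * I * δ * ω - ωp ^ 2 = (ω - p) * (ω - q) :=
    sq_sub_two_I_mul_sub_sq_eq_mul (by nlinarith)
  rw [integral_congr_ae (g := fun ω : ℝ => (∫ t in (τ - Δt / 2)..(τ + Δt / 2), cexp (I * ω * t)) *
      (((ω : ℂ) - p) * ((ω : ℂ) - q))⁻¹) ?integrand,
    integral_intervalIntegral_cexp_mul_swap (integrable_inv_ofReal_sub_mul_sub hp.ne' hq.ne'),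
    intervalIntegral.integral_congr (g := 0) fun t ht =>
      integral_cexp_mul_inv_sub_mul_sub_eq_zero hp hq hpq ?neg]
  · simp
  case neg => rcases mem_uIcc.1 ht with h | h <;> linarith [h.2]
  case integrand =>
    filter_upwards [volume.ae_ne 0] with ω hω
    rw [hfactor]
    exact_mod_cast sub_cexp_mul_cexp_div_eq_intervalIntegral hω (Δt / 2) τ _
end

section
/- Fix real δ, ω_p with 0 < δ < ω_p, Δt > 0, t_0 ∈ ℝ, set t_n = t_0 + nΔt, z⁺ = iδ + √(ω_p² − δ²), z⁻ = iδ − √(ω_p² − δ²), and c^± = (e^{iz^±Δt/2} − e^{−iz^±Δt/2})/(z^±(z^∓ − z^±)). Let E : ℕ → ℂ and define F^± : ℕ → ℂ by F^±(0) = c^± E(0) and F^±(N) = F^±(N−1) e^{iz^±Δt} + c^± E(N). Then for every N and every real t, Σ_{n=0}^{N} E(n) · G(t; t_n, Δt) = e^{iz⁺(t−t_N)} F⁺(N) + e^{iz⁻(t−t_N)} F⁻(N), where G(t; t_n, Δt) = Σ_{±} (e^{iz^±Δt/2} − e^{−iz^±Δt/2}) e^{iz^±(t−t_n)} / (z^±(z^∓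 − z^±)). -/
/-! The Green function is a sum of two exponential modes `c^± e^{i z^± (t - tₙ)}`, and each mode
satisfies `e^{i z (t - tₙ)} = e^{i z (t - tₙ₊₁)} e^{i z Δt}`. Hence the part of the convolution
sum carried by one mode, divided by `e^{i z (t - t_N)}`, obeys exactly the accumulator recurrence
`F(N+1) = F(N) e^{i z Δt} + c E(N+1)`. -/

open Finset

theorem sum_range_succ_mul_eq_of_accumulator {R : Type*} [CommSemiring R] (w c : R)
    (u E F : ℕ → R) (hu : ∀ n, u n = u (n + 1) * w)
    (hF0 : F 0 = c * E 0) (hF : ∀ N, F (N + 1) = F N * w + c * E (N + 1)) (N : ℕ) :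
    ∑ n ∈ range (N + 1), E n * (c * u n) = u N * F N := by
  induction N with
  | zero => rw [sum_range_one, hF0]; ring
  | succ N ih => rw [sum_range_succ, ih, hu N, hF]; ring

theorem Complex.exp_I_mul_sub_eq_next_mul_exp (z Δt t t₀ : ℂ) (n : ℕ) :
    Complex.exp (Complex.I * z * (t - (t₀ + n * Δt))) =
      Complex.exp (Complex.I * z * (t - (t₀ + ((n + 1 : ℕ) : ℂ) * Δt))) *
        Complex.exp (Complex.I * z * Δt) := by
  rw [← Complex.exp_add]
  push_cast
  ring_nf

theorem tgm_two_accumulator_identity_general (Δt t_0 : ℝ)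
    (zp zm : ℂ)
    (cp cm : ℂ)
    (hcp : cp = (Complex.exp (Complex.I * zp * (Δt / 2)) -
        Complex.exp (-(Complex.I * zp * (Δt / 2)))) / (zp * (zm - zp)))
    (hcm : cm = (Complex.exp (Complex.I * zm * (Δt / 2)) -
        Complex.exp (-(Complex.I * zm * (Δt / 2)))) / (zm * (zp - zm)))
    (E Fp Fm : ℕ → ℂ)
    (hFp0 : Fp 0 = cp * E 0)
    (hFp : ∀ N : ℕ, Fp (N + 1) = Fp N * Complex.exp (Complex.I * zp * Δt) + cp * E (N + 1))
    (hFm0 : Fm 0 = cm * E 0)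
    (hFm : ∀ N : ℕ, Fm (N + 1) = Fm N * Complex.exp (Complex.I * zm * Δt) + cm * E (N + 1))
    (G : ℝ → ℕ → ℂ)
    (hG : ∀ (t : ℝ) (n : ℕ), G t n =
      (Complex.exp (Complex.I * zp * (Δt / 2)) - Complex.exp (-(Complex.I * zp * (Δt / 2)))) *
          Complex.exp (Complex.I * zp * ((t : ℂ) - ((t_0 : ℂ) + (n : ℂ) * Δt))) /
            (zp * (zm - zp)) +
      (Complex.exp (Complex.I * zm * (Δt / 2)) - Complex.exp (-(Complex.I * zm * (Δt / 2)))) *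
          Complex.exp (Complex.I * zm * ((t : ℂ) - ((t_0 : ℂ) + (n : ℂ) * Δt))) /
            (zm * (zp - zm))) :
    ∀ (N : ℕ) (t : ℝ),
      ∑ n ∈ Finset.range (N + 1), E n * G t n =
        Complex.exp (Complex.I * zp * ((t : ℂ) - ((t_0 : ℂ) + (N : ℂ) * Δt))) * Fp N +
        Complex.exp (Complex.I * zm * ((t : ℂ) - ((t_0 : ℂ) + (N : ℂ) * Δt))) * Fm N := by
  intro N t
  set mode : ℂ → ℕ → ℂ := fun z n => Complex.exp (Complex.I * z * (t - (t_0 + n * Δt)))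
  have hG_modes : ∀ n, G t n = cp * mode zp n + cm * mode zm n := by
    intro n
    rw [hG, hcp, hcm]
    ring
  have hmode_step : ∀ z n, mode z n = mode z (n + 1) * Complex.exp (Complex.I * z * Δt) :=
    fun z n => Complex.exp_I_mul_sub_eq_next_mul_exp z Δt t t_0 n
  simp only [hG_modes, mul_add, sum_add_distrib]
  rw [sum_range_succ_mul_eq_of_accumulator _ cp (mode zp) E Fp (hmode_step zp) hFp0 hFp,
    sum_range_succ_mul_eq_of_accumulator _ cm (mode zm) E Fm (hmode_step zm) hFm0 hFm]

/-- Fix real `δ, ω_p` with `0 < δ < ω_p`, `Δt > 0`, `t_0 ∈ ℝ`, set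
`t_n = t_0 + nΔt`, `z⁺ = iδ + √(ω_p² − δ²)`, `z⁻ = iδ − √(ω_p² − δ²)`, and
`c^± = (e^{iz^±Δt/2} − e^{−iz^±Δt/2})/(z^±(z^∓ − z^±))`. Let `E : ℕ → ℂ` and define
`F^± : ℕ → ℂ` by `F^±(0) = c^± E(0)` and `F^±(N) = F^±(N−1) e^{iz^±Δt} + c^± E(N)`.
Then for every `N` and every real `t`,
`Σ_{n=0}^{N} E(n) · G(t; t_n, Δt) = e^{iz⁺(t−t_N)} F⁺(N) + e^{iz⁻(t−t_N)} F⁻(N)`,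
where `G(t; t_n, Δt) = Σ_± (e^{iz^±Δt/2} − e^{−iz^±Δt/2}) e^{iz^±(t−t_n)} / (z^±(z^∓ − z^±))`. -/
theorem tgm_two_accumulator_identity (δ ωp Δt t_0 : ℝ)
    (hδ : 0 < δ) (hδω : δ < ωp) (hΔt : 0 < Δt)
    (zp zm : ℂ)
    (hzp : zp = Complex.I * δ + Real.sqrt (ωp ^ 2 - δ ^ 2))
    (hzm : zm = Complex.I * δ - Real.sqrt (ωp ^ 2 - δ ^ 2))
    (cp cm : ℂ)
    (hcp : cp = (Complex.exp (Complex.I * zp * (Δt / 2)) -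
        Complex.exp (-(Complex.I * zp * (Δt / 2)))) / (zp * (zm - zp)))
    (hcm : cm = (Complex.exp (Complex.I * zm * (Δt / 2)) -
        Complex.exp (-(Complex.I * zm * (Δt / 2)))) / (zm * (zp - zm)))
    (E Fp Fm : ℕ → ℂ)
    (hFp0 : Fp 0 = cp * E 0)
    (hFp : ∀ N : ℕ, Fp (N + 1) = Fp N * Complex.exp (Complex.I * zp * Δt) + cp * E (N + 1))
    (hFm0 : Fm 0 = cm * E 0)
    (hFm : ∀ N : ℕ, Fm (N + 1) = Fm N * Complex.exp (Complex.I * zm * Δt) + cm * E (N + 1))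
    (G : ℝ → ℕ → ℂ)
    (hG : ∀ (t : ℝ) (n : ℕ), G t n =
      (Complex.exp (Complex.I * zp * (Δt / 2)) - Complex.exp (-(Complex.I * zp * (Δt / 2)))) *
          Complex.exp (Complex.I * zp * ((t : ℂ) - ((t_0 : ℂ) + (n : ℂ) * Δt))) /
            (zp * (zm - zp)) +
      (Complex.exp (Complex.I * zm * (Δt / 2)) - Complex.exp (-(Complex.I * zm * (Δt / 2)))) *
          Complex.exp (Complex.I * zm * ((t : ℂ) - ((t_0 : ℂ) + (n : ℂ) * Δt))) /
            (zm * (zp - zm))) :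
    ∀ (N : ℕ) (t : ℝ),
      ∑ n ∈ Finset.range (N + 1), E n * G t n =
        Complex.exp (Complex.I * zp * ((t : ℂ) - ((t_0 : ℂ) + (N : ℂ) * Δt))) * Fp N +
        Complex.exp (Complex.I * zm * ((t : ℂ) - ((t_0 : ℂ) + (N : ℂ) * Δt))) * Fm N :=
  tgm_two_accumulator_identity_general Δt t_0 zp zm cp cm hcp hcm E Fp Fm hFp0 hFp hFm0 hFm G hG
end

section
/- Fix real δ, ω_p with 0 < δ < ω_p and Δt > 0, and let z⁺ = iδ + √(ω_p² − δ²), z⁻ = iδ − √(ω_p² − δ²). Then |e^{iz⁺Δt}| = |e^{iz⁻Δt}| = e^{−δΔt} < 1. Consequently, for any c ∈ ℂ, any z ∈ {z⁺, z⁻}, and any sequence E : ℕ → ℂ with |E(n)| ≤ M for all n, the recurrence F(0) = c·E(0), F(N) = F(N−1) e^{izΔt} + c·E(N) satisfies |F(N)| ≤ |c| M / (1 − e^{−δΔt}) for every N; in particular the Transient Green Method recurrence is stable for every time step Δt > 0. -/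
/-! Since `|e^{izΔt}| = e^{-Δt Im z}` and `Im z± = δ > 0`, each step multiplies the accumulator by a
factor of norm `r = e^{-δΔt} < 1` and adds a term of norm at most `B = |c| M`; by induction the
accumulator never leaves the ball of radius `B (1 + r + r² + ⋯) = B / (1 - r)`. -/

theorem norm_le_div_one_sub_of_recurrence {R : Type*} [SeminormedRing R] {q : R} {r B : ℝ}
    (hq : ‖q‖ ≤ r) (hr : r < 1) {b G : ℕ → R} (hb : ∀ n, ‖b n‖ ≤ B) (h0 : G 0 = b 0)
    (hrec : ∀ N, G (N + 1) = G N * q + b (N + 1)) (N : ℕ) :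
    ‖G N‖ ≤ B / (1 - r) := by
  have hr0 : 0 ≤ r := (norm_nonneg q).trans hq
  have hB : 0 ≤ B := (norm_nonneg _).trans (hb 0)
  have h1r : 0 < 1 - r := sub_pos.mpr hr
  induction N with
  | zero =>
    rw [h0]
    exact (hb 0).trans (le_div_self hB h1r (by linarith))
  | succ n ih =>
    calc ‖G (n + 1)‖ ≤ ‖G n‖ * ‖q‖ + ‖b (n + 1)‖ := by
          rw [hrec n]; exact (norm_add_le _ _).trans (by gcongr; exact norm_mul_le _ _)
      _ ≤ B / (1 - r) * r + B := by gcongr; exact hb _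
      _ = B / (1 - r) := by field_simp; ring

theorem Complex.norm_exp_I_mul_mul_ofReal (z : ℂ) (t : ℝ) :
    ‖Complex.exp (Complex.I * z * t)‖ = Real.exp (-z.im * t) := by
  simp [Complex.norm_exp, Complex.mul_re]

theorem tgm_unconditional_stability_general (δ ωp Δt : ℝ)
    (hδ : 0 < δ) (hΔt : 0 < Δt)
    (zp zm : ℂ)
    (hzp : zp = Complex.I * δ + Real.sqrt (ωp ^ 2 - δ ^ 2))
    (hzm : zm = Complex.I * δ - Real.sqrt (ωp ^ 2 - δ ^ 2)) :
    ‖Complex.exp (Complex.I * zp * Δt)‖ = Real.exp (-δ * Δt) ∧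
    ‖Complex.exp (Complex.I * zm * Δt)‖ = Real.exp (-δ * Δt) ∧
    Real.exp (-δ * Δt) < 1 ∧
    ∀ (c z : ℂ), (z = zp ∨ z = zm) → ∀ (E : ℕ → ℂ) (M : ℝ),
      (∀ n : ℕ, ‖E n‖ ≤ M) →
      ∀ F : ℕ → ℂ, F 0 = c * E 0 →
        (∀ N : ℕ, F (N + 1) = F N * Complex.exp (Complex.I * z * Δt) + c * E (N + 1)) →
        ∀ N : ℕ, ‖F N‖ ≤ ‖c‖ * M / (1 - Real.exp (-δ * Δt)) := by
  have hnorm : ∀ z : ℂ, z = zp ∨ z = zm →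
      ‖Complex.exp (Complex.I * z * Δt)‖ = Real.exp (-δ * Δt) := by
    rintro z (rfl | rfl) <;> simp [Complex.norm_exp_I_mul_mul_ofReal, hzp, hzm]
  have hdecay : Real.exp (-δ * Δt) < 1 := Real.exp_lt_one_iff.mpr (by nlinarith)
  refine ⟨hnorm zp (.inl rfl), hnorm zm (.inr rfl), hdecay, ?_⟩
  intro c z hz E M hE F h0 hrec
  refine norm_le_div_one_sub_of_recurrence (hnorm z hz).le hdecay (b := fun n ↦ c * E n)
    (fun n ↦ ?_) h0 hrec
  rw [norm_mul]
  exact mul_le_mul_of_nonneg_left (hE n) (norm_nonneg c)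

/-- Fix real `δ, ω_p` with `0 < δ < ω_p` and `Δt > 0`, and let
`z⁺ = iδ + √(ω_p² − δ²)`, `z⁻ = iδ − √(ω_p² − δ²)`. Then
`|e^{iz⁺Δt}| = |e^{iz⁻Δt}| = e^{−δΔt} < 1`. Consequently, for any `c ∈ ℂ`, any
`z ∈ {z⁺, z⁻}`, and any sequence `E : ℕ → ℂ` with `|E(n)| ≤ M` for all `n`, the recurrence
`F(0) = c·E(0)`, `F(N) = F(N−1) e^{izΔt} + c·E(N)` satisfies
`|F(N)| ≤ |c| M / (1 − e^{−δΔt})` for every `N`; in particular the Transient Green Method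
recurrence is stable for every time step `Δt > 0`. -/
theorem tgm_unconditional_stability (δ ωp Δt : ℝ)
    (hδ : 0 < δ) (hδω : δ < ωp) (hΔt : 0 < Δt)
    (zp zm : ℂ)
    (hzp : zp = Complex.I * δ + Real.sqrt (ωp ^ 2 - δ ^ 2))
    (hzm : zm = Complex.I * δ - Real.sqrt (ωp ^ 2 - δ ^ 2)) :
    ‖Complex.exp (Complex.I * zp * Δt)‖ = Real.exp (-δ * Δt) ∧
    ‖Complex.exp (Complex.I * zm * Δt)‖ = Real.exp (-δ * Δt) ∧
    Real.exp (-δ * Δt) < 1 ∧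
    ∀ (c z : ℂ), (z = zp ∨ z = zm) → ∀ (E : ℕ → ℂ) (M : ℝ),
      (∀ n : ℕ, ‖E n‖ ≤ M) →
      ∀ F : ℕ → ℂ, F 0 = c * E 0 →
        (∀ N : ℕ, F (N + 1) = F N * Complex.exp (Complex.I * z * Δt) + c * E (N + 1)) →
        ∀ N : ℕ, ‖F N‖ ≤ ‖c‖ * M / (1 - Real.exp (-δ * Δt)) :=
  tgm_unconditional_stability_general δ ωp Δt hδ hΔt zp zm hzp hzm
end
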